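/- arXiv:1110.3715 — 4 statements merged into one kernel-verified Lean document; each statement's English description precedes it below -/
import Mathlib

section
/- Second mean value theorem. Let F : ℝ → ℝ be continuous with lim_{x→−∞} F(x) = 0 and lim_{x→∞} F(x) = F_∞ ∈ ℝ. Let g : ℝ → ℝ be bounded, nondecreasing and right continuous, with limits g(−∞) at −∞ and g(+∞) at +∞, and let μ_g be its Lebesgue–Stieltjes measure. Then there exists c ∈ ℝ with c ∈ F(ℝ) ∪ {0, F_∞} (c = F(ξ) for some ξ in the extended real line) such that F_∞ · g(+∞) − ∫_ℝ F dμ_g = g(−∞) · c + g(+∞) · (F_∞ − c). -/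
/-!
Since `μ_g(ℝ) = g(+∞) - g(-∞)`, the claim says that `c` may be taken to be the `μ_g`-average of
`F`. That average lies in the closed convex set `closure (F(ℝ))` (an interval, `F(ℝ)` being
connected), and this closure adds at most the limits `0` and `F_∞` to `F(ℝ)` because
`F(ℝ) ∪ {0, F_∞}` is compact.
-/

open MeasureTheory Filter Topology Set

lemma tendsto_abs_cocompact_atTop : Tendsto (fun t : ℝ => |t|) (cocompact ℝ) atTop := by
  rw [cocompact_eq_atBot_atTop, ← comap_abs_atTop]
  exact tendsto_comap

/- Folding `ℝ` onto either half-line by `t ↦ ±|t|` turns each one-sided limit into a limit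
along `cocompact ℝ`. -/
lemma isCompact_range_union_of_tendsto {X : Type*} [TopologicalSpace X] {f : ℝ → X} {a b : X}
    (hf : Continuous f) (ha : Tendsto f atBot (𝓝 a)) (hb : Tendsto f atTop (𝓝 b)) :
    IsCompact (range f ∪ {a, b}) := by
  have hpos : IsCompact (insert b (range fun t => f |t|)) :=
    (hb.comp tendsto_abs_cocompact_atTop).isCompact_insert_range_of_cocompact
      (hf.comp continuous_abs)
  have hneg : IsCompact (insert a (range fun t => f (-|t|))) :=
    ((ha.comp tendsto_neg_atTop_atBot).comp tendsto_abs_cocompact_atTop)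
      |>.isCompact_insert_range_of_cocompact (hf.comp continuous_abs.neg)
  have hrange : range f = (range fun t => f |t|) ∪ range fun t => f (-|t|) := by
    refine Subset.antisymm ?_
      (union_subset (range_comp_subset_range _ _) (range_comp_subset_range _ _))
    rintro _ ⟨t, rfl⟩
    rcases le_total 0 t with ht | ht
    · exact Or.inl ⟨t, congrArg f (abs_of_nonneg ht)⟩
    · exact Or.inr ⟨t, congrArg f (by rw [abs_of_nonpos ht, neg_neg])⟩
  convert hneg.union hpos using 1
  rw [hrange]
  ext
  simp only [mem_insert_iff, mem_union, mem_singleton_iff]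
  tauto

/-- Second mean value theorem for the pairing of F ∈ ℬ_c with the
Lebesgue–Stieltjes measure of a bounded nondecreasing right-continuous function. -/
theorem second_mean_value (F : ℝ → ℝ) (hF : Continuous F)
    (Finf : ℝ) (hbot : Tendsto F atBot (𝓝 0)) (htop : Tendsto F atTop (𝓝 Finf))
    (g : StieltjesFunction ℝ) (gbot gtop : ℝ)
    (hgbot : Tendsto (⇑g) atBot (𝓝 gbot)) (hgtop : Tendsto (⇑g) atTop (𝓝 gtop)) :
    ∃ c : ℝ, (c ∈ Set.range F ∨ c = 0 ∨ c = Finf) ∧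
      Finf * gtop - ∫ x : ℝ, F x ∂g.measure = gbot * c + gtop * (Finf - c) := by
  have := g.isFiniteMeasure hgbot hgtop
  have hK := isCompact_range_union_of_tendsto hF hbot htop
  obtain ⟨C, hC⟩ := isBounded_iff_forall_norm_le.1 (hK.isBounded.subset subset_union_left)
  have hint : Integrable F g.measure :=
    .of_bound hF.aestronglyMeasurable C (ae_of_all _ fun x => hC _ ⟨x, rfl⟩)
  have havg : ⨍ x, F x ∂g.measure ∈ range F ∪ {0, Finf} := by
    rcases eq_or_ne g.measure 0 with hμ | hμ
    · -- the average over the zero measure is the junk value `0`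
      rw [hμ, average_zero_measure]
      exact Or.inr (mem_insert _ _)
    · have : NeZero g.measure := ⟨hμ⟩
      refine hK.isClosed.closure_subset_iff.2 subset_union_left ?_
      exact (Real.convex_iff_isPreconnected.2 (isPreconnected_range hF).closure).average_mem
        isClosed_closure (ae_of_all _ fun x => subset_closure ⟨x, rfl⟩) hint
  have hmass : g.measure.real univ = gtop - gbot := by
    rw [measureReal_def, g.measure_univ hgbot hgtop, ENNReal.toReal_ofReal]
    linarith [g.mono.le_of_tendsto hgbot 0, g.mono.ge_of_tendsto hgtop 0]
  refine ⟨⨍ x, F x ∂g.measure, havg, ?_⟩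
  rw [← measure_smul_average, hmass, smul_eq_mul]
  ring
end

section
/- The Banach lattice ℬ_r (with the pointwise order) has no order unit: for every e ∈ ℬ_r with e(x) ≥ 0 for all x ∈ ℝ, there exists F ∈ ℬ_r such that for every real λ > 0 there is a point x ∈ ℝ with |F(x)| > λ·e(x). (Consequently the lattices 𝒜^n_r, isomorphic to ℬ_r, have no order unit.) -/
/-!
Take `F = √e + σ` with `σ` the logistic sigmoid. Both summands lie in `ℬ_r`: `√` is
continuous with `√0 = 0`, and `σ` is continuous with limits `0` and `1`. Since `e → 0`
at `-∞`, far to the left `λ² e ≤ 1`, and there `λ e ≤ √e < √e + σ` because `σ > 0`.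
-/

open MeasureTheory Filter Topology

/-- Membership in ℬ_r: left continuous (in particular left limits exist),
right limits exist, vanishes at -∞, has a real limit at ∞. -/
def MemBr (F : ℝ → ℝ) : Prop :=
  (∀ x : ℝ, Tendsto F (𝓝[<] x) (𝓝 (F x))) ∧
  (∀ x : ℝ, ∃ R : ℝ, Tendsto F (𝓝[>] x) (𝓝 R)) ∧
  Tendsto F atBot (𝓝 0) ∧
  (∃ L : ℝ, Tendsto F atTop (𝓝 L))

namespace MemBr

variable {F G : ℝ → ℝ}

theorem of_continuous (hc : Continuous F) (hbot : Tendsto F atBot (𝓝 0)) {L : ℝ}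
    (htop : Tendsto F atTop (𝓝 L)) : MemBr F :=
  ⟨fun _ => hc.continuousAt.tendsto.mono_left nhdsWithin_le_nhds,
    fun x => ⟨F x, hc.continuousAt.tendsto.mono_left nhdsWithin_le_nhds⟩, hbot, L, htop⟩

theorem comp (hF : MemBr F) {g : ℝ → ℝ} (hg : Continuous g) (hg0 : g 0 = 0) :
    MemBr (g ∘ F) := by
  obtain ⟨hleft, hright, hbot, L, htop⟩ := hF
  refine ⟨fun x => (hg.tendsto _).comp (hleft x), fun x => ?_, ?_, g L,
    (hg.tendsto L).comp htop⟩
  · obtain ⟨R, hR⟩ := hright x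
    exact ⟨g R, (hg.tendsto R).comp hR⟩
  · simpa only [hg0] using (hg.tendsto 0).comp hbot

theorem add (hF : MemBr F) (hG : MemBr G) : MemBr (F + G) := by
  obtain ⟨hFl, hFr, hFb, L, hFt⟩ := hF
  obtain ⟨hGl, hGr, hGb, M, hGt⟩ := hG
  refine ⟨fun x => (hFl x).add (hGl x), fun x => ?_, ?_, L + M, hFt.add hGt⟩
  · obtain ⟨R, hR⟩ := hFr x
    obtain ⟨S, hS⟩ := hGr x
    exact ⟨R + S, hR.add hS⟩
  · rw [← add_zero (0 : ℝ)]
    exact hFb.add hGb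

end MemBr

theorem memBr_sigmoid : MemBr Real.sigmoid :=
  .of_continuous continuous_sigmoid Real.tendsto_sigmoid_atBot Real.tendsto_sigmoid_atTop

theorem mul_le_sqrt_of_sq_mul_le_one {lam t : ℝ} (hlam : 0 ≤ lam) (ht : 0 ≤ t)
    (h : lam ^ 2 * t ≤ 1) : lam * t ≤ √t := by
  have hlam_sqrt : lam * √t ≤ 1 := by
    rw [← Real.sqrt_sq hlam, ← Real.sqrt_mul (sq_nonneg lam)]
    exact Real.sqrt_le_one.mpr h
  calc lam * t = lam * √t * √t := by rw [mul_assoc, Real.mul_self_sqrt ht]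
    _ ≤ √t := mul_le_of_le_one_left (Real.sqrt_nonneg t) hlam_sqrt

/-- ℬ_r has no order unit for the pointwise order. -/
theorem Br_no_order_unit (e : ℝ → ℝ) (he : MemBr e) (hpos : ∀ x : ℝ, 0 ≤ e x) :
    ∃ F : ℝ → ℝ, MemBr F ∧ ∀ lam : ℝ, 0 < lam → ∃ x : ℝ, lam * e x < |F x| := by
  refine ⟨Real.sqrt ∘ e + Real.sigmoid,
    (he.comp Real.continuous_sqrt Real.sqrt_zero).add memBr_sigmoid, fun lam hlam => ?_⟩
  have hsmall : ∀ᶠ x in atBot, lam ^ 2 * e x < 1 := by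
    have hlim := he.2.2.1.const_mul (lam ^ 2)
    rw [mul_zero] at hlim
    exact hlim.eventually (gt_mem_nhds one_pos)
  obtain ⟨x, hx⟩ := hsmall.exists
  refine ⟨x, ?_⟩
  calc lam * e x ≤ √(e x) := mul_le_sqrt_of_sq_mul_le_one hlam.le (hpos x) hx.le
    _ < √(e x) + Real.sigmoid x := lt_add_of_pos_right _ (Real.sigmoid_pos x)
    _ ≤ |(Real.sqrt ∘ e + Real.sigmoid) x| := le_abs_self _
end

section
/- The lattice ℬ_r is not order complete (not Dedekind complete): there exists a nonempty countable family S ⊆ ℬ_r that has an upper bound in ℬ_r for the pointwise order, yet S has no least upper bound in ℬ_r; that is, no G ∈ ℬ_r satisfies both (i) F(x) ≤ G(x) for all x ∈ ℝ and all F ∈ S, and (ii) G(x) ≤ H(x) for all x ∈ ℝ whenever H ∈ ℬ_r satisfies F(x) ≤ H(x) for all x and all F ∈ S. (An example is S = {F_n : n ∈ ℕ} with F_n(x) = sin(π/x) for x ≥ 1/n and F_n(x) = 0 for x < 1/n.) -/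
open MeasureTheory Filter Topology

/-!
For every `n`, the function equal to `1` on `(0, 1/(n+1)]`, to `max (sin (π / x)) 0`
beyond, and to `0` on `(-∞, 0]` is an upper bound in `ℬ_r` of all the `F_m`. Since
`1/(n+1)` can be taken as small as we like, a least upper bound would have to equal
`max (sin (π / x)) 0` on all of `(0, ∞)`; but that function takes the values `0` and `1`
at points accumulating at `0`, so it has no right limit there.
-/

open Real Set

lemma memBr_of_continuous {F : ℝ → ℝ} (hF : Continuous F) (hbot : Tendsto F atBot (𝓝 0))
    {L : ℝ} (htop : Tendsto F atTop (𝓝 L)) : MemBr F :=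
  ⟨fun _ => hF.continuousWithinAt, fun x => ⟨F x, hF.continuousWithinAt⟩, hbot, L, htop⟩

lemma MemBr.max {F G : ℝ → ℝ} (hF : MemBr F) (hG : MemBr G) :
    MemBr fun x => max (F x) (G x) := by
  obtain ⟨hFl, hFr, hFbot, LF, hFtop⟩ := hF
  obtain ⟨hGl, hGr, hGbot, LG, hGtop⟩ := hG
  refine ⟨fun x => (hFl x).max (hGl x), fun x => ?_, by simpa using hFbot.max hGbot,
    _, hFtop.max hGtop⟩
  obtain ⟨RF, hRF⟩ := hFr x
  obtain ⟨RG, hRG⟩ := hGr x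
  exact ⟨_, hRF.max hRG⟩

lemma memBr_indicator_Ioc (a b c : ℝ) : MemBr ((Ioc a b).indicator fun _ => c) := by
  have hconst {l : Filter ℝ} {s : Set ℝ} {x : ℝ}
      (h : ∀ᶠ y in l, y ∈ Ioc a b ↔ x ∈ s) :
      Tendsto ((Ioc a b).indicator fun _ => c) l (𝓝 (s.indicator (fun _ => c) x)) :=
    tendsto_const_nhds.congr' <| h.mono fun y hy => (indicator_const_eq_indicator_const hy).symm
  have hnear (x : ℝ) : ∀ᶠ y in 𝓝 x,
      (a < x → a < y) ∧ (b < x → b < y) ∧ (x < a → y < a) ∧ (x < b → y < b) := by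
    simp only [eventually_and, eventually_imp_distrib_left]
    exact ⟨eventually_gt_nhds, eventually_gt_nhds, eventually_lt_nhds, eventually_lt_nhds⟩
  refine ⟨fun x => hconst ?_, fun x => ⟨_, hconst (s := Ico a b) (x := x) ?_⟩, ?_, 0, ?_⟩
  · filter_upwards [self_mem_nhdsWithin, nhdsWithin_le_nhds (hnear x)] with y (hy : y < x) h
    simp only [mem_Ioc]
    grind
  · filter_upwards [self_mem_nhdsWithin, nhdsWithin_le_nhds (hnear x)] with y (hy : x < y) h
    simp only [mem_Ioc, mem_Ico]
    grind
  · simpa using hconst (s := ∅) (x := 0) <|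
      (eventually_le_atBot a).mono fun y hy => iff_of_false (fun h => h.1.not_ge hy) id
  · simpa using hconst (s := ∅) (x := 0) <|
      (eventually_gt_atTop b).mono fun y hy => iff_of_false (fun h => h.2.not_gt hy) id

/-- The paper's `F_{n+1}`, written so that its continuity is evident: `sin (π / x)`
vanishes at `x = 1/(n+1)`. -/
noncomputable def truncSinPiDiv (n : ℕ) (x : ℝ) : ℝ :=
  sin (π / max x (1 / ((n : ℝ) + 1)))

noncomputable def posPartSinPiDiv (x : ℝ) : ℝ :=
  max (sin (π / x)) 0

lemma sin_pi_div_one_div_nat_add_one (n : ℕ) : sin (π / (1 / ((n : ℝ) + 1))) = 0 := by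
  rw [div_div_eq_mul_div, div_one, ← Nat.cast_add_one, mul_comm, sin_nat_mul_pi]

lemma sin_pi_div_two_div_four_mul_add_one (k : ℕ) : sin (π / (2 / (4 * (k : ℝ) + 1))) = 1 := by
  have : π / (2 / (4 * (k : ℝ) + 1)) = π / 2 + k * (2 * π) := by
    field_simp
    ring
  rw [this, sin_add_nat_mul_two_pi, sin_pi_div_two]

lemma truncSinPiDiv_of_le {n : ℕ} {x : ℝ} (hx : x ≤ 1 / ((n : ℝ) + 1)) :
    truncSinPiDiv n x = 0 := by
  rw [truncSinPiDiv, max_eq_right hx, sin_pi_div_one_div_nat_add_one]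

lemma truncSinPiDiv_of_ge {n : ℕ} {x : ℝ} (hx : 1 / ((n : ℝ) + 1) ≤ x) :
    truncSinPiDiv n x = sin (π / x) := by
  rw [truncSinPiDiv, max_eq_left hx]

lemma continuous_truncSinPiDiv (n : ℕ) : Continuous (truncSinPiDiv n) :=
  continuous_sin.comp <| continuous_const.div (continuous_id.max continuous_const) fun x =>
    (lt_max_of_lt_right (by positivity)).ne'

lemma tendsto_truncSinPiDiv_atTop (n : ℕ) : Tendsto (truncSinPiDiv n) atTop (𝓝 0) := by
  have h : Tendsto (fun x => π / max x (1 / ((n : ℝ) + 1))) atTop (𝓝 0) :=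
    tendsto_const_nhds.div_atTop (tendsto_atTop_mono (fun _ => le_max_left _ _) tendsto_id)
  rw [← sin_zero]
  exact (continuous_sin.tendsto 0).comp h

lemma memBr_truncSinPiDiv (n : ℕ) : MemBr (truncSinPiDiv n) :=
  memBr_of_continuous (continuous_truncSinPiDiv n)
    (tendsto_const_nhds.congr' <| (eventually_le_atBot _).mono fun _ hx =>
      (truncSinPiDiv_of_le hx).symm)
    (tendsto_truncSinPiDiv_atTop n)

lemma truncSinPiDiv_zero_nonneg (x : ℝ) : 0 ≤ truncSinPiDiv 0 x := by
  rcases le_total x 1 with hx | hx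
  · rw [truncSinPiDiv_of_le (by simpa using hx)]
  · rw [truncSinPiDiv_of_ge (by simpa using hx)]
    exact sin_nonneg_of_nonneg_of_le_pi (by positivity) (div_le_self pi_pos.le hx)

lemma truncSinPiDiv_le_posPartSinPiDiv (n : ℕ) (x : ℝ) :
    truncSinPiDiv n x ≤ posPartSinPiDiv x := by
  rcases le_total x (1 / ((n : ℝ) + 1)) with hx | hx
  · rw [truncSinPiDiv_of_le hx]
    exact le_max_right _ _
  · rw [truncSinPiDiv_of_ge hx]
    exact le_max_left _ _

noncomputable def sinUpperBound (n : ℕ) (x : ℝ) : ℝ :=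
  max ((Ioc 0 (1 / ((n : ℝ) + 1))).indicator (fun _ => 1) x) (max (truncSinPiDiv n x) 0)

lemma memBr_sinUpperBound (n : ℕ) : MemBr (sinUpperBound n) :=
  (memBr_indicator_Ioc _ _ _).max <|
    (memBr_truncSinPiDiv n).max (memBr_of_continuous continuous_const tendsto_const_nhds
      tendsto_const_nhds)

lemma sinUpperBound_of_lt {n : ℕ} {x : ℝ} (hx : 1 / ((n : ℝ) + 1) < x) :
    sinUpperBound n x = posPartSinPiDiv x := by
  rw [sinUpperBound, indicator_of_notMem (fun h : x ∈ Ioc _ _ => h.2.not_gt hx),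
    truncSinPiDiv_of_ge hx.le, posPartSinPiDiv, max_eq_right (le_max_right _ _)]

lemma truncSinPiDiv_le_sinUpperBound (m n : ℕ) (x : ℝ) :
    truncSinPiDiv m x ≤ sinUpperBound n x := by
  rcases le_or_gt x 0 with hx0 | hx0
  · rw [truncSinPiDiv_of_le (hx0.trans (by positivity))]
    exact (le_max_right _ _).trans (le_max_right _ _)
  rcases le_or_gt x (1 / ((n : ℝ) + 1)) with hxn | hxn
  · rw [sinUpperBound, indicator_of_mem (show x ∈ Ioc _ _ from ⟨hx0, hxn⟩)]
    exact (sin_le_one _).trans (le_max_left _ _)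
  · rw [sinUpperBound_of_lt hxn]
    exact truncSinPiDiv_le_posPartSinPiDiv m x

lemma eqOn_posPartSinPiDiv_of_forall_le {G : ℝ → ℝ}
    (hlow : ∀ n x, truncSinPiDiv n x ≤ G x) (hup : ∀ n x, G x ≤ sinUpperBound n x) :
    EqOn G posPartSinPiDiv (Ioi 0) := by
  intro x (hx : 0 < x)
  obtain ⟨n, hn⟩ := exists_nat_one_div_lt hx
  refine le_antisymm ((hup n x).trans_eq (sinUpperBound_of_lt hn)) (max_le ?_ ?_)
  · exact (truncSinPiDiv_of_ge hn.le).symm.trans_le (hlow n x)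
  · exact (truncSinPiDiv_zero_nonneg x).trans (hlow 0 x)

lemma not_tendsto_posPartSinPiDiv_nhdsGT_zero (R : ℝ) :
    ¬ Tendsto posPartSinPiDiv (𝓝[>] 0) (𝓝 R) := by
  intro h
  have hzeros : Tendsto (fun k : ℕ => 1 / ((k : ℝ) + 1)) atTop (𝓝[>] 0) :=
    tendsto_nhdsWithin_of_tendsto_nhds_of_eventually_within _
      tendsto_one_div_add_atTop_nhds_zero_nat (.of_forall fun _ => mem_Ioi.2 (by positivity))
  have hones : Tendsto (fun k : ℕ => 2 / (4 * (k : ℝ) + 1)) atTop (𝓝[>] 0) :=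
    tendsto_nhdsWithin_of_tendsto_nhds_of_eventually_within _
      (tendsto_const_nhds.div_atTop <| tendsto_atTop_add_const_right _ _ <|
        tendsto_natCast_atTop_atTop.const_mul_atTop (by norm_num))
      (.of_forall fun _ => mem_Ioi.2 (by positivity))
  have hR0 : R = 0 := tendsto_nhds_unique (h.comp hzeros) <| tendsto_const_nhds.congr fun k => by
    simp only [Function.comp_apply, posPartSinPiDiv, sin_pi_div_one_div_nat_add_one, max_self]
  have hR1 : R = 1 := tendsto_nhds_unique (h.comp hones) <| tendsto_const_nhds.congr fun k => by
    simp only [Function.comp_apply, posPartSinPiDiv, sin_pi_div_two_div_four_mul_add_one,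
      max_eq_left zero_le_one]
  exact zero_ne_one (hR0.symm.trans hR1)

/-- ℬ_r is not order (Dedekind) complete: some nonempty countable family of
elements of ℬ_r is bounded above in ℬ_r, yet has no least upper bound in ℬ_r. -/
theorem Br_not_order_complete :
    ∃ S : Set (ℝ → ℝ), S.Nonempty ∧ S.Countable ∧ (∀ F ∈ S, MemBr F) ∧
      (∃ H : ℝ → ℝ, MemBr H ∧ ∀ F ∈ S, ∀ x : ℝ, F x ≤ H x) ∧
      ¬ ∃ G : ℝ → ℝ, MemBr G ∧ (∀ F ∈ S, ∀ x : ℝ, F x ≤ G x) ∧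
        (∀ H : ℝ → ℝ, MemBr H → (∀ F ∈ S, ∀ x : ℝ, F x ≤ H x) →
          ∀ x : ℝ, G x ≤ H x) := by
  have hbound (n : ℕ) : ∀ F ∈ range truncSinPiDiv, ∀ x, F x ≤ sinUpperBound n x :=
    forall_mem_range.2 fun m => truncSinPiDiv_le_sinUpperBound m n
  refine ⟨range truncSinPiDiv, range_nonempty _, countable_range _,
    forall_mem_range.2 memBr_truncSinPiDiv, ⟨_, memBr_sinUpperBound 0, hbound 0⟩, ?_⟩
  rintro ⟨G, hG, hub, hleast⟩
  have hG_eq : EqOn G posPartSinPiDiv (Ioi 0) :=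
    eqOn_posPartSinPiDiv_of_forall_le (fun n => hub _ (mem_range_self n))
      (fun n => hleast _ (memBr_sinUpperBound n) (hbound n))
  obtain ⟨R, hR⟩ := hG.2.1 0
  exact not_tendsto_posPartSinPiDiv_nhdsGT_zero R
    (hR.congr' (eventuallyEq_nhdsWithin_of_eqOn hG_eq))
end

section
/- Hölder inequality. Let F ∈ ℬ_c with F_∞ = lim_{x→∞} F(x) and ‖F‖_∞ = sup_{x∈ℝ}|F(x)|. Let g : ℝ → ℝ be of bounded variation with total variation V(g) on ℝ, and suppose g = g₁ − g₂ where g₁, g₂ are bounded nondecreasing right-continuous functions whose variations realise the Jordan decomposition, i.e. (g₁(+∞) − g₁(−∞)) + (g₂(+∞) − g₂(−∞)) = V(g). Then |F_∞·(g₁(+∞) − g₂(+∞)) − ∫_ℝ F dμ_{g₁} + ∫_ℝ F dμ_{g₂}| ≤ ‖F‖_∞ · ( sup_{x∈ℝ}|g(x)| + V(g) ). (The left-hand side is the pairing ∫ F' g = F(∞)g(∞) − ∫ F dg defining the integral of f = F' ∈ 𝒜¹_c against g, and the right-hand side is ‖f‖_{a,1}·‖g‖_{ℬ𝒱}.) 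-/
/-!
The three terms of the pairing are bounded separately: `|F_∞| ≤ ‖F‖_∞` and
`|g(+∞)| ≤ sup |g|`, while `|∫ F dμ_{gᵢ}| ≤ ‖F‖_∞ μ_{gᵢ}(ℝ) = ‖F‖_∞ (gᵢ(+∞) - gᵢ(-∞))`, and the
Jordan condition turns the sum of these two masses into `V(g)`. The supremum `‖F‖_∞` is finite
because a continuous function with limits at `±∞` is bounded outside a compact set.
-/

open MeasureTheory Filter Topology Set

theorem Continuous.bddAbove_range_of_isBoundedUnder_cocompact {X α : Type*}
    [TopologicalSpace X] [LinearOrder α] [TopologicalSpace α] [ClosedIciTopology α] [Nonempty α]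
    {f : X → α} (hf : Continuous f) (h : IsBoundedUnder (· ≤ ·) (cocompact X) f) :
    BddAbove (range f) := by
  obtain ⟨C, hC⟩ := h
  obtain ⟨K, hK, hKC⟩ := mem_cocompact.1 hC
  refine ((hK.bddAbove_image hf.continuousOn).union (bddAbove_Iic (a := C))).mono ?_
  rintro _ ⟨x, rfl⟩
  by_cases hx : x ∈ K
  · exact .inl (mem_image_of_mem f hx)
  · exact .inr (hKC hx)

theorem Continuous.bddAbove_range_abs_of_tendsto {F : ℝ → ℝ} (hF : Continuous F) {a b : ℝ}
    (hbot : Tendsto F atBot (𝓝 a)) (htop : Tendsto F atTop (𝓝 b)) :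
    BddAbove (range fun x => |F x|) := by
  refine hF.abs.bddAbove_range_of_isBoundedUnder_cocompact ?_
  rw [cocompact_eq_atBot_atTop, IsBoundedUnder, map_sup]
  exact isBounded_sup hbot.abs.isBoundedUnder_le htop.abs.isBoundedUnder_le

theorem Monotone.abs_le_max_of_tendsto {α : Type*} [Preorder α] [IsDirectedOrder α]
    [IsCodirectedOrder α] {f : α → ℝ} (hf : Monotone f) {l u : ℝ}
    (hl : Tendsto f atBot (𝓝 l)) (hu : Tendsto f atTop (𝓝 u)) (x : α) :
    |f x| ≤ max |l| |u| :=
  abs_le_max_abs_abs (hf.le_of_tendsto hl x) (hf.ge_of_tendsto hu x)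

namespace StieltjesFunction

variable (f : StieltjesFunction ℝ) {l u : ℝ}

theorem measureReal_univ (hl : Tendsto f atBot (𝓝 l)) (hu : Tendsto f atTop (𝓝 u)) :
    f.measure.real univ = u - l := by
  rw [measureReal_def, f.measure_univ hl hu, ENNReal.toReal_ofReal]
  exact sub_nonneg.2 ((f.mono.le_of_tendsto hl 0).trans (f.mono.ge_of_tendsto hu 0))

theorem norm_integral_le_of_norm_le_const (hl : Tendsto f atBot (𝓝 l))
    (hu : Tendsto f atTop (𝓝 u)) {E : Type*} [NormedAddCommGroup E] [NormedSpace ℝ E]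
    {φ : ℝ → E} {C : ℝ} (h : ∀ x, ‖φ x‖ ≤ C) : ‖∫ x, φ x ∂f.measure‖ ≤ C * (u - l) := by
  have := f.isFiniteMeasure hl hu
  simpa only [f.measureReal_univ hl hu] using
    MeasureTheory.norm_integral_le_of_norm_le_const (μ := f.measure) (ae_of_all _ h)

end StieltjesFunction

theorem holder_inequality_general (F : ℝ → ℝ) (hFc : Continuous F)
    (Finf : ℝ) (hbot : Tendsto F atBot (𝓝 0)) (htop : Tendsto F atTop (𝓝 Finf))
    (g : ℝ → ℝ)
    (g₁ g₂ : StieltjesFunction ℝ)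
    (g₁bot g₁top g₂bot g₂top : ℝ)
    (hg₁bot : Tendsto (⇑g₁) atBot (𝓝 g₁bot)) (hg₁top : Tendsto (⇑g₁) atTop (𝓝 g₁top))
    (hg₂bot : Tendsto (⇑g₂) atBot (𝓝 g₂bot)) (hg₂top : Tendsto (⇑g₂) atTop (𝓝 g₂top))
    (hdecomp : ∀ x : ℝ, g x = g₁ x - g₂ x)
    (hjordan : (g₁top - g₁bot) + (g₂top - g₂bot) = (eVariationOn g Set.univ).toReal) :
    |Finf * (g₁top - g₂top) - (∫ x : ℝ, F x ∂g₁.measure) + ∫ x : ℝ, F x ∂g₂.measure|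
      ≤ (⨆ x : ℝ, |F x|) * ((⨆ x : ℝ, |g x|) + (eVariationOn g Set.univ).toReal) := by
  set M := ⨆ x : ℝ, |F x|
  set S := ⨆ x : ℝ, |g x|
  have hFM : ∀ x, |F x| ≤ M := le_ciSup (hFc.bddAbove_range_abs_of_tendsto hbot htop)
  have hgS : ∀ x, |g x| ≤ S := by
    refine le_ciSup ⟨max |g₁bot| |g₁top| + max |g₂bot| |g₂top|, forall_mem_range.2 fun x => ?_⟩
    rw [hdecomp]
    exact (abs_sub _ _).trans (add_le_add (g₁.mono.abs_le_max_of_tendsto hg₁bot hg₁top x)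
      (g₂.mono.abs_le_max_of_tendsto hg₂bot hg₂top x))
  have hgtop : Tendsto g atTop (𝓝 (g₁top - g₂top)) :=
    (hg₁top.sub hg₂top).congr fun x => (hdecomp x).symm
  have hFinf : |Finf| ≤ M := le_of_tendsto' htop.abs hFM
  have hgtopS : |g₁top - g₂top| ≤ S := le_of_tendsto' hgtop.abs hgS
  have hFM' : ∀ x, ‖F x‖ ≤ M := hFM
  have hint₁ := g₁.norm_integral_le_of_norm_le_const hg₁bot hg₁top hFM'
  have hint₂ := g₂.norm_integral_le_of_norm_le_const hg₂bot hg₂top hFM'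
  rw [Real.norm_eq_abs] at hint₁ hint₂
  calc _ ≤ |Finf| * |g₁top - g₂top| + |∫ x, F x ∂g₁.measure| + |∫ x, F x ∂g₂.measure| := by
        rw [← abs_mul]; exact (abs_add_le _ _).trans (by gcongr; exact abs_sub _ _)
    _ ≤ M * S + M * (g₁top - g₁bot) + M * (g₂top - g₂bot) := by
        gcongr
        exact (abs_nonneg _).trans (hFM 0)
    _ = M * (S + (eVariationOn g Set.univ).toReal) := by rw [← hjordan]; ring

/-- Hölder inequality for the pairing of f = F′ ∈ 𝒜¹_c with a function of
bounded variation g = g₁ − g₂ (Jordan decomposition realising the variation):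
|∫ F' g| ≤ ‖F‖_∞ (sup|g| + V(g)). -/
theorem holder_inequality (F : ℝ → ℝ) (hFc : Continuous F)
    (Finf : ℝ) (hbot : Tendsto F atBot (𝓝 0)) (htop : Tendsto F atTop (𝓝 Finf))
    (g : ℝ → ℝ) (hgBV : eVariationOn g Set.univ ≠ ⊤)
    (g₁ g₂ : StieltjesFunction ℝ)
    (g₁bot g₁top g₂bot g₂top : ℝ)
    (hg₁bot : Tendsto (⇑g₁) atBot (𝓝 g₁bot)) (hg₁top : Tendsto (⇑g₁) atTop (𝓝 g₁top))
    (hg₂bot : Tendsto (⇑g₂) atBot (𝓝 g₂bot)) (hg₂top : Tendsto (⇑g₂) atTop (𝓝 g₂top))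
    (hdecomp : ∀ x : ℝ, g x = g₁ x - g₂ x)
    (hjordan : (g₁top - g₁bot) + (g₂top - g₂bot) = (eVariationOn g Set.univ).toReal) :
    |Finf * (g₁top - g₂top) - (∫ x : ℝ, F x ∂g₁.measure) + ∫ x : ℝ, F x ∂g₂.measure|
      ≤ (⨆ x : ℝ, |F x|) * ((⨆ x : ℝ, |g x|) + (eVariationOn g Set.univ).toReal) :=
  holder_inequality_general F hFc Finf hbot htop g g₁ g₂ g₁bot g₁top g₂bot g₂top hg₁bot hg₁top
    hg₂bot hg₂top hdecomp hjordan
end
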